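/- Let p ∈ [1,∞), d ≥ 1, and c̄ > 0. There exists a constant C = C(p, c̄, d) such that for every x ∈ ℝ^d, every R > 0, every measurable set Ω ⊆ x + (-R,R)^d with |Ω| ≥ c̄ R^d, and every affine map a : ℝ^d → ℝ^d, one has ‖a‖_{L^p(x+(-R,R)^d)} ≤ C ‖a‖_{L^p(Ω)}. -/

import Mathlib

open MeasureTheory

/-- The open cube of center `x` and half side length `R` in `ℝ^d`. -/
def cube (d : ℕ) (x : EuclideanSpace ℝ (Fin d)) (R : ℝ) : Set (EuclideanSpace ℝ (Fin d)) :=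
  {y | ∀ i, y i ∈ Set.Ioo (x i - R) (x i + R)}

/-- The affine map `y ↦ A y + b` on `ℝ^d`. -/
noncomputable def affMap (d : ℕ) (A : Matrix (Fin d) (Fin d) ℝ) (b : EuclideanSpace ℝ (Fin d)) :
    EuclideanSpace ℝ (Fin d) → EuclideanSpace ℝ (Fin d) :=
  fun y => (WithLp.equiv 2 (Fin d → ℝ)).symm (A.mulVec (WithLp.equiv 2 (Fin d → ℝ) y)) + b

/-!
Each coordinate of `a` is a scalar affine function `f y = v ⬝ᵥ y + c`, bounded on the cube by
`M = |f x| + R ∑ₖ |v k|`. Inside the cube, `{|f| < t}` has relative measure at most `4 d t / M`: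
either `R ∑ₖ |v k| ≤ M / 4`, and then `|f| ≥ M / 2` on the cube, or a largest coefficient has
`|v j| ≥ M / (4 R d)` and the set lies in a slab of width `2 t / |v j|` across direction `j`.
For `t = ε M` with `ε = c̄ / (2^(d+3) d)` this costs at most half of the measure `c̄ R^d` of `Ω`,
so by Chebyshev `‖a‖_{L^p(Ω)} ≳ ε M |Q|^{1/p}` for every coordinate, while
`‖a‖_{L^p(Q)} ≤ |Q|^{1/p} ∑ M`.
-/

theorem Matrix.det_one_updateRow {ι R : Type*} [Fintype ι] [DecidableEq ι] [CommRing R]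
    (j : ι) (v : ι → R) : ((1 : Matrix ι ι R).updateRow j v).det = v j := by
  have hv : v = ∑ k, v k • (1 : Matrix ι ι R) k := by
    ext l
    simp [Matrix.one_eq_pi_single, Pi.single_apply]
  conv_lhs => rw [hv]
  rw [det_updateRow_sum, det_one, smul_eq_mul, mul_one]

theorem volume_preimage_update_dotProduct {ι : Type*} [Fintype ι] [DecidableEq ι] {v : ι → ℝ}
    {j : ι} (hv : v j ≠ 0) (s : ι → Set ℝ) :
    volume ((fun y : ι → ℝ => Function.update y j (v ⬝ᵥ y)) ⁻¹' Set.univ.pi s) =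
      ENNReal.ofReal |v j|⁻¹ * ∏ k, volume (s k) := by
  have hL : (fun y : ι → ℝ => Function.update y j (v ⬝ᵥ y)) =
      Matrix.toLin' ((1 : Matrix ι ι ℝ).updateRow j v) := by
    ext1 y
    simp [Matrix.updateRow_mulVec]
  have hdet : LinearMap.det (Matrix.toLin' ((1 : Matrix ι ι ℝ).updateRow j v)) = v j := by
    rw [LinearMap.det_toLin', Matrix.det_one_updateRow]
  rw [hL, Measure.addHaar_preimage_linearMap _ (hdet ▸ hv), hdet, volume_pi_pi, abs_inv]

theorem EuclideanSpace.volume_preimage_ofLp {ι : Type*} [Fintype ι] (s : Set (ι → ℝ)) :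
    volume (WithLp.ofLp ⁻¹' s : Set (EuclideanSpace ℝ ι)) = volume s :=
  (EuclideanSpace.volume_preserving_symm_measurableEquiv_toLp ι).measure_preimage_equiv s

theorem EuclideanSpace.norm_le_sum_abs {ι : Type*} [Fintype ι] (w : EuclideanSpace ℝ ι) :
    ‖w‖ ≤ ∑ i, |w i| := by
  rw [EuclideanSpace.norm_eq]
  calc √(∑ i, ‖w i‖ ^ 2) ≤ √((∑ i, ‖w i‖) ^ 2) :=
        Real.sqrt_le_sqrt (Finset.sum_sq_le_sq_sum_of_nonneg fun i _ => norm_nonneg _)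
    _ = ∑ i, |w i| := by
        rw [Real.sqrt_sq (Finset.sum_nonneg fun i _ => norm_nonneg _)]
        rfl

theorem abs_dotProduct_le {ι : Type*} [Fintype ι] {w : ι → ℝ} {R : ℝ} (hw : ∀ k, |w k| ≤ R)
    (v : ι → ℝ) : |v ⬝ᵥ w| ≤ R * ∑ k, |v k| := by
  rw [Finset.mul_sum]
  refine (Finset.abs_sum_le_sum_abs _ _).trans (Finset.sum_le_sum fun k _ => ?_)
  rw [abs_mul, mul_comm]
  exact mul_le_mul_of_nonneg_right (hw k) (abs_nonneg _)

theorem mul_measure_rpow_le_eLpNorm {α E : Type*} [MeasurableSpace α] {μ : Measure α}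
    [TopologicalSpace E] [ContinuousENorm E] {q : ENNReal} (hq0 : q ≠ 0) (hqtop : q ≠ ⊤) {f : α → E}
    (hf : AEStronglyMeasurable f μ) (m : ENNReal) :
    m * μ {x | m ≤ ‖f x‖ₑ} ^ q.toReal⁻¹ ≤ eLpNorm f q μ := by
  have hq : 0 < q.toReal := ENNReal.toReal_pos hq0 hqtop
  rw [← ENNReal.rpow_le_rpow_iff hq, ENNReal.mul_rpow_of_nonneg _ _ hq.le,
    ENNReal.rpow_inv_rpow hq.ne']
  exact mul_meas_ge_le_pow_eLpNorm' μ hq0 hqtop hf m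

section Cube

variable {d : ℕ} {x y : EuclideanSpace ℝ (Fin d)} {R : ℝ}

theorem cube_eq_preimage_ofLp (x : EuclideanSpace ℝ (Fin d)) (R : ℝ) :
    cube d x R = WithLp.ofLp ⁻¹' Set.univ.pi fun i => Set.Ioo (x i - R) (x i + R) := by
  ext y
  simp [cube]

theorem measurableSet_cube (x : EuclideanSpace ℝ (Fin d)) (R : ℝ) :
    MeasurableSet (cube d x R) := by
  rw [cube_eq_preimage_ofLp]
  exact measurableSet_preimage (PiLp.continuous_ofLp 2 _).measurable
    (MeasurableSet.univ_pi fun _ => measurableSet_Ioo)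

theorem volume_cube (x : EuclideanSpace ℝ (Fin d)) (R : ℝ) :
    volume (cube d x R) = ENNReal.ofReal (2 * R) ^ d := by
  rw [cube_eq_preimage_ofLp, EuclideanSpace.volume_preimage_ofLp, volume_pi_pi]
  simp [Real.volume_Ioo, two_mul]

theorem abs_dotProduct_sub_le_of_mem_cube (hy : y ∈ cube d x R) (v : Fin d → ℝ) :
    |v ⬝ᵥ y.ofLp - v ⬝ᵥ x.ofLp| ≤ R * ∑ k, |v k| := by
  rw [← dotProduct_sub]
  refine abs_dotProduct_le (fun k => abs_le.2 ⟨?_, ?_⟩) v <;>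
    simp only [Pi.sub_apply] <;> linarith [(hy k).1, (hy k).2]

def affineBound (x : EuclideanSpace ℝ (Fin d)) (R : ℝ) (v : Fin d → ℝ) (c : ℝ) : ℝ :=
  |v ⬝ᵥ x.ofLp + c| + R * ∑ k, |v k|

theorem affineBound_nonneg (x : EuclideanSpace ℝ (Fin d)) (hR : 0 ≤ R) (v : Fin d → ℝ) (c : ℝ) :
    0 ≤ affineBound x R v c := by
  unfold affineBound
  positivity

theorem abs_le_affineBound_of_mem_cube (hy : y ∈ cube d x R) (v : Fin d → ℝ) (c : ℝ) :
    |v ⬝ᵥ y.ofLp + c| ≤ affineBound x R v c := by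
  have hxy := abs_dotProduct_sub_le_of_mem_cube hy v
  unfold affineBound
  calc |v ⬝ᵥ y.ofLp + c| = |(v ⬝ᵥ x.ofLp + c) + (v ⬝ᵥ y.ofLp - v ⬝ᵥ x.ofLp)| := by ring_nf
    _ ≤ _ := (abs_add_le _ _).trans (by gcongr)

theorem volume_sublevel_le_of_ne_zero {v : Fin d → ℝ} {j : Fin d} (hv : v j ≠ 0) (c t : ℝ) :
    volume {y ∈ cube d x R | |v ⬝ᵥ y.ofLp + c| < t} ≤
      ENNReal.ofReal (2 * t / |v j|) * ENNReal.ofReal (2 * R) ^ (d - 1) := by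
  set I : Fin d → Set ℝ := fun k => Set.Ioo (x k - R) (x k + R)
  have hsub : {y ∈ cube d x R | |v ⬝ᵥ y.ofLp + c| < t} ⊆ WithLp.ofLp ⁻¹'
      ((fun y : Fin d → ℝ => Function.update y j (v ⬝ᵥ y)) ⁻¹'
        Set.univ.pi (Function.update I j (Set.Ioo (-c - t) (-c + t)))) := by
    rintro y ⟨hy, hlt⟩
    simp only [Set.mem_preimage, Set.mem_univ_pi]
    intro k
    rcases eq_or_ne k j with rfl | hk
    · simp only [Function.update_self]
      constructor <;> linarith [(abs_lt.1 hlt).1, (abs_lt.1 hlt).2]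
    · simpa [hk, I] using hy k
  refine (measure_mono hsub).trans_eq ?_
  rw [EuclideanSpace.volume_preimage_ofLp, volume_preimage_update_dotProduct hv]
  have hvol : ∀ k, volume (Function.update I j (Set.Ioo (-c - t) (-c + t)) k) =
      Function.update (fun _ => ENNReal.ofReal (2 * R)) j (ENNReal.ofReal (2 * t)) k := by
    intro k
    rcases eq_or_ne k j with rfl | hk
    · simp only [Function.update_self, Real.volume_Ioo]
      ring_nf
    · simp only [Function.update_of_ne hk, I, Real.volume_Ioo]
      ring_nf
  rw [Finset.prod_congr rfl fun k _ => hvol k, Finset.prod_update_of_mem (Finset.mem_univ j),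
    Finset.prod_const, Finset.card_sdiff, ← mul_assoc, ← ENNReal.ofReal_mul (by positivity),
    div_eq_inv_mul]
  simp

theorem volume_sublevel_le (hd : 1 ≤ d) {v : Fin d → ℝ} {c t : ℝ} (hM : 0 < affineBound x R v c)
    (ht : 0 ≤ t) :
    volume {y ∈ cube d x R | |v ⬝ᵥ y.ofLp + c| < t} ≤
      ENNReal.ofReal (4 * d * t / affineBound x R v c) * volume (cube d x R) := by
  set M := affineBound x R v c
  by_cases hlarge : 1 ≤ 4 * d * t / M
  · exact (measure_mono (Set.sep_subset _ _)).trans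
      (le_mul_of_one_le_left' (ENNReal.one_le_ofReal.2 hlarge))
  have hd' : (1 : ℝ) ≤ d := by exact_mod_cast hd
  have htM : 4 * t < M := by
    rw [not_le, div_lt_one hM] at hlarge
    nlinarith
  have hsum_nonneg : 0 ≤ ∑ k, |v k| := Finset.sum_nonneg fun k _ => abs_nonneg (v k)
  rcases le_or_gt (4 * R * ∑ k, |v k|) M with hflat | hsteep
  · suffices {y ∈ cube d x R | |v ⬝ᵥ y.ofLp + c| < t} = ∅ by simp [this]
    refine Set.eq_empty_of_forall_notMem fun y ⟨hy, hlt⟩ => ?_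
    have hxy := abs_dotProduct_sub_le_of_mem_cube hy v
    have hrev := abs_sub_abs_le_abs_sub (v ⬝ᵥ x.ofLp + c) (v ⬝ᵥ y.ofLp + c)
    rw [abs_sub_comm, add_sub_add_right_eq_sub] at hrev
    have hMeq : M = |v ⬝ᵥ x.ofLp + c| + R * ∑ k, |v k| := rfl
    linarith
  · have : Nonempty (Fin d) := ⟨⟨0, hd⟩⟩
    obtain ⟨j, hj⟩ := Finite.exists_max fun k => |v k|
    have hsum : ∑ k, |v k| ≤ d * |v j| := by
      simpa using Finset.sum_le_sum fun k (_ : k ∈ Finset.univ) => hj k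
    have hR : 0 < R := by nlinarith
    have hMle : M ≤ 4 * R * (d * |v j|) := hsteep.le.trans (by gcongr)
    have hvj : 0 < |v j| := (abs_nonneg _).lt_of_ne fun h => by
      rw [← h, mul_zero, mul_zero] at hMle
      linarith
    refine (volume_sublevel_le_of_ne_zero (abs_pos.1 hvj) c t).trans ?_
    rw [volume_cube, ← Nat.sub_add_cancel hd, pow_succ', Nat.add_sub_cancel, ← mul_assoc,
      ← ENNReal.ofReal_mul (by positivity), Nat.sub_add_cancel hd]
    gcongr
    rw [div_mul_eq_mul_div, div_le_div_iff₀ hvj hM]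
    nlinarith [mul_le_mul_of_nonneg_left hMle (by positivity : 0 ≤ 2 * t)]

theorem le_volume_inter_setOf_le_abs (hd : 1 ≤ d) {cbar : ℝ} (hcbar : 0 < cbar) (hR : 0 < R)
    {Ω : Set (EuclideanSpace ℝ (Fin d))} (hΩ : Ω ⊆ cube d x R)
    (hvol : ENNReal.ofReal (cbar * R ^ d) ≤ volume Ω) (v : Fin d → ℝ) (c : ℝ) :
    ENNReal.ofReal (cbar / 2 ^ (d + 1)) * volume (cube d x R) ≤
      volume (Ω ∩ {y | cbar / (2 ^ (d + 3) * d) * affineBound x R v c ≤ |v ⬝ᵥ y.ofLp + c|}) := by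
  have hd' : (0 : ℝ) < d := by exact_mod_cast hd
  have hhalf : ENNReal.ofReal (cbar / 2 ^ (d + 1)) * volume (cube d x R) =
      ENNReal.ofReal (cbar / 2 * R ^ d) := by
    rw [volume_cube, ← ENNReal.ofReal_pow (by positivity), ← ENNReal.ofReal_mul (by positivity),
      mul_pow, pow_succ]
    congr 1
    field_simp
  have hsublevel : volume {y ∈ cube d x R |
      |v ⬝ᵥ y.ofLp + c| < cbar / (2 ^ (d + 3) * d) * affineBound x R v c} ≤
      ENNReal.ofReal (cbar / 2 * R ^ d) := by
    rcases (affineBound_nonneg x hR.le v c).eq_or_lt with hM | hM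
    · simp [← hM, (abs_nonneg _).not_gt]
    · rw [← hhalf]
      refine (volume_sublevel_le hd hM (by positivity)).trans_eq ?_
      congr 2
      field_simp
      ring
  rw [hhalf]
  calc ENNReal.ofReal (cbar / 2 * R ^ d)
      = ENNReal.ofReal (cbar * R ^ d) - ENNReal.ofReal (cbar / 2 * R ^ d) := by
        rw [← ENNReal.ofReal_sub _ (by positivity)]
        ring_nf
    _ ≤ volume Ω - volume {y ∈ cube d x R |
          |v ⬝ᵥ y.ofLp + c| < cbar / (2 ^ (d + 3) * d) * affineBound x R v c} :=
        tsub_le_tsub hvol hsublevel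
    _ ≤ volume (Ω \ {y ∈ cube d x R |
          |v ⬝ᵥ y.ofLp + c| < cbar / (2 ^ (d + 3) * d) * affineBound x R v c}) :=
        le_measure_sdiff
    _ ≤ volume (Ω ∩ {y | cbar / (2 ^ (d + 3) * d) * affineBound x R v c ≤ |v ⬝ᵥ y.ofLp + c|}) :=
        measure_mono fun y ⟨hyΩ, hy⟩ => ⟨hyΩ, not_lt.1 fun hlt => hy ⟨hΩ hyΩ, hlt⟩⟩

theorem rpow_volume_cube_mul_le_eLpNorm (hd : 1 ≤ d) {cbar : ℝ} (hcbar : 0 < cbar) (hR : 0 < R)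
    {Ω : Set (EuclideanSpace ℝ (Fin d))} (hΩ : Ω ⊆ cube d x R)
    (hvol : ENNReal.ofReal (cbar * R ^ d) ≤ volume Ω) {q : ENNReal} (hq0 : q ≠ 0) (hqtop : q ≠ ⊤)
    (v : Fin d → ℝ) (c : ℝ) :
    volume (cube d x R) ^ q.toReal⁻¹ * ENNReal.ofReal (affineBound x R v c) ≤
      ENNReal.ofReal ((cbar / (2 ^ (d + 3) * d) * (cbar / 2 ^ (d + 1)) ^ q.toReal⁻¹)⁻¹) *
        eLpNorm (fun y => v ⬝ᵥ y.ofLp + c) q (volume.restrict Ω) := by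
  have hd' : (0 : ℝ) < d := by exact_mod_cast hd
  have hε : 0 < cbar / (2 ^ (d + 3) * d) := by positivity
  have hκ : 0 < cbar / 2 ^ (d + 1) := by positivity
  have hr : 0 ≤ q.toReal⁻¹ := inv_nonneg.2 ENNReal.toReal_nonneg
  have hM := affineBound_nonneg x hR.le v c
  set r := q.toReal⁻¹
  set ε := cbar / (2 ^ (d + 3) * d)
  set κ := cbar / 2 ^ (d + 1)
  set M := affineBound x R v c
  have hf : Continuous fun y : EuclideanSpace ℝ (Fin d) => v ⬝ᵥ y.ofLp + c := by fun_prop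
  have hlevel : ENNReal.ofReal κ * volume (cube d x R) ≤
      volume.restrict Ω {y | ENNReal.ofReal (ε * M) ≤ ‖v ⬝ᵥ y.ofLp + c‖ₑ} := by
    refine (le_volume_inter_setOf_le_abs hd hcbar hR hΩ hvol v c).trans
      ((measure_mono ?_).trans (Measure.le_restrict_apply _ _))
    rintro y ⟨hyΩ, hy⟩
    refine ⟨?_, hyΩ⟩
    rw [Set.mem_ofPred_eq, Real.enorm_eq_ofReal_abs]
    exact ENNReal.ofReal_le_ofReal hy
  calc volume (cube d x R) ^ r * ENNReal.ofReal M
      = ENNReal.ofReal (ε * κ ^ r)⁻¹ *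
          (ENNReal.ofReal (ε * M) * (ENNReal.ofReal κ * volume (cube d x R)) ^ r) := by
        rw [ENNReal.mul_rpow_of_nonneg _ _ hr, ENNReal.ofReal_rpow_of_nonneg (by positivity) hr,
          ← mul_assoc, ← mul_assoc, ← ENNReal.ofReal_mul (by positivity),
          ← ENNReal.ofReal_mul (by positivity), mul_comm]
        congr 2
        field_simp
    _ ≤ ENNReal.ofReal (ε * κ ^ r)⁻¹ *
          eLpNorm (fun y => v ⬝ᵥ y.ofLp + c) q (volume.restrict Ω) := by
        gcongr
        exact (mul_measure_rpow_le_eLpNorm hq0 hqtop hf.aestronglyMeasurable _).trans' (by gcongr)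

end Cube

/-- Lemma 4.1: for `p ∈ [1,∞)`, `c̄ > 0`, there is `C = C(p,c̄,d)` such that for every cube
`Q = x + (-R,R)^d`, every measurable `Ω ⊆ Q` with `|Ω| ≥ c̄ R^d` and every affine map `a`,
`‖a‖_{L^p(Q)} ≤ C ‖a‖_{L^p(Ω)}`. -/
theorem affine_norm_comparison (d : ℕ) (hd : 1 ≤ d) (p : ℝ) (hp : 1 ≤ p)
    (cbar : ℝ) (hcbar : 0 < cbar) :
    ∃ C : ℝ, 0 < C ∧
      ∀ (x : EuclideanSpace ℝ (Fin d)) (R : ℝ), 0 < R →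
        ∀ Ω : Set (EuclideanSpace ℝ (Fin d)), MeasurableSet Ω → Ω ⊆ cube d x R →
          ENNReal.ofReal (cbar * R ^ d) ≤ volume Ω →
          ∀ (A : Matrix (Fin d) (Fin d) ℝ) (b : EuclideanSpace ℝ (Fin d)),
            eLpNorm (affMap d A b) (ENNReal.ofReal p) (volume.restrict (cube d x R)) ≤
              ENNReal.ofReal C * eLpNorm (affMap d A b) (ENNReal.ofReal p) (volume.restrict Ω) := by
  set q := ENNReal.ofReal p
  have hq0 : q ≠ 0 := by
    rw [Ne, ENNReal.ofReal_eq_zero, not_le]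
    linarith
  set K := (cbar / (2 ^ (d + 3) * d) * (cbar / 2 ^ (d + 1)) ^ q.toReal⁻¹)⁻¹
  refine ⟨d * K, by positivity, fun x R hR Ω _ hΩ hvol A b => ?_⟩
  set N := eLpNorm (affMap d A b) q (volume.restrict Ω)
  set V := volume (cube d x R) ^ q.toReal⁻¹
  have hupper : eLpNorm (affMap d A b) q (volume.restrict (cube d x R)) ≤
      V * ENNReal.ofReal (∑ i, affineBound x R (A i) (b i)) := by
    refine (eLpNorm_le_of_ae_bound ((ae_restrict_mem (measurableSet_cube x R)).mono
      fun y hy => ?_)).trans_eq (by rw [Measure.restrict_apply_univ])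
    exact (EuclideanSpace.norm_le_sum_abs _).trans
      (Finset.sum_le_sum fun i _ => abs_le_affineBound_of_mem_cube hy (A i) (b i))
  have hcoord : ∀ i, V * ENNReal.ofReal (affineBound x R (A i) (b i)) ≤ ENNReal.ofReal K * N :=
    fun i => (rpow_volume_cube_mul_le_eLpNorm hd hcbar hR hΩ hvol hq0 ENNReal.ofReal_ne_top
      (A i) (b i)).trans
        (by gcongr; exact eLpNorm_mono fun y => PiLp.norm_apply_le (affMap d A b y) i)
  calc _ ≤ V * ENNReal.ofReal (∑ i, affineBound x R (A i) (b i)) := hupper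
    _ = ∑ i, V * ENNReal.ofReal (affineBound x R (A i) (b i)) := by
        rw [← Finset.mul_sum, ← ENNReal.ofReal_sum_of_nonneg
          fun i _ => affineBound_nonneg x hR.le (A i) (b i)]
    _ ≤ ∑ _i : Fin d, ENNReal.ofReal K * N := Finset.sum_le_sum fun i _ => hcoord i
    _ = ENNReal.ofReal (d * K) * N := by
        rw [Finset.sum_const, Finset.card_univ, Fintype.card_fin, nsmul_eq_mul,
          ENNReal.ofReal_mul (by positivity), ENNReal.ofReal_natCast, mul_assoc]
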